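/- Let G be a simple 3-regular graph. Then κ₀(x,y) = 0 for every edge xy of G if and only if G is isomorphic to a prism graph Y_n for some n ≥ 4 or to a Möbius ladder M_k for some k ≥ 3. -/

import Mathlib

open Finset

variable {V : Type*}

/-- The non-normalized graph Laplacian: `Δ f (x) = ∑_{y ∼ x} (f y − f x)`. -/
noncomputable def graphLap (G : SimpleGraph V) [∀ v, Fintype (G.neighborSet v)]
    (f : V → ℝ) (x : V) : ℝ :=
  ∑ y ∈ G.neighborFinset x, (f y - f x)

/-- The Bakry–Émery operator `Γ`: `2Γ(f,g) = Δ(fg) − fΔg − gΔf`. -/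
noncomputable def graphGamma (G : SimpleGraph V) [∀ v, Fintype (G.neighborSet v)]
    (f g : V → ℝ) (x : V) : ℝ :=
  (graphLap G (fun z => f z * g z) x - f x * graphLap G g x - g x * graphLap G f x) / 2

/-- The Bakry–Émery operator `Γ₂`: `2Γ₂(f,g) = ΔΓ(f,g) − Γ(f,Δg) − Γ(Δf,g)`. -/
noncomputable def graphGamma2 (G : SimpleGraph V) [∀ v, Fintype (G.neighborSet v)]
    (f g : V → ℝ) (x : V) : ℝ :=
  (graphLap G (graphGamma G f g) x - graphGamma G f (graphLap G g) x -
    graphGamma G (graphLap G f) g x) / 2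

/-- A vertex `x` satisfies the curvature-dimension inequality `CD(0,∞)` if
`Γ₂(f)(x) ≥ 0` for all `f : V → ℝ`. -/
def SatisfiesCD (G : SimpleGraph V) [∀ v, Fintype (G.neighborSet v)] (x : V) : Prop :=
  ∀ f : V → ℝ, 0 ≤ graphGamma2 G f f x

open Classical in
/-- The idleness-0 probability measure `μ_x^0` at a vertex `x`. -/
noncomputable def muZero (G : SimpleGraph V) [∀ v, Fintype (G.neighborSet v)] (x : V) :
    V → ℝ :=
  fun z => if G.Adj x z then 1 / (G.degree x : ℝ) else 0

/-- The Wasserstein distance `W₁(μ_x^0, μ_y^0)`: the infimum of the transport cost over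
all couplings of `μ_x^0` and `μ_y^0`. -/
noncomputable def Wone (G : SimpleGraph V) [∀ v, Fintype (G.neighborSet v)] (x y : V) : ℝ :=
  sInf {w : ℝ | ∃ π : V → V → ℝ,
    (∀ u v, 0 ≤ π u v) ∧
    (∀ u v, π u v ≠ 0 → G.Adj x u ∧ G.Adj y v) ∧
    (∀ u, ∑ v ∈ G.neighborFinset y, π u v = muZero G x u) ∧
    (∀ v, ∑ u ∈ G.neighborFinset x, π u v = muZero G y v) ∧
    w = ∑ u ∈ G.neighborFinset x, ∑ v ∈ G.neighborFinset y, (G.dist u v : ℝ) * π u v}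

/-- The Ollivier–Ricci curvature with idleness `0`: `κ₀(x,y) = 1 − W₁(μ_x^0, μ_y^0)`. -/
noncomputable def kappaZero (G : SimpleGraph V) [∀ v, Fintype (G.neighborSet v)]
    (x y : V) : ℝ :=
  1 - Wone G x y

/-- The prism graph `Y n` on vertices `ZMod n × Bool`: two `n`-cycles joined by rungs;
equivalently the Cartesian product of the cycle `C_n` with `K₂`. -/
def prismGraph (n : ℕ) : SimpleGraph (ZMod n × Bool) :=
  SimpleGraph.fromRel (fun p q => (p.2 = q.2 ∧ q.1 = p.1 + 1) ∨ (p.1 = q.1 ∧ p.2 ≠ q.2))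

/-- The Möbius ladder `M n` on vertices `ZMod (2n)`: the cycle `C_{2n}` together with
all antipodal edges. -/
def mobiusLadder (n : ℕ) : SimpleGraph (ZMod (2 * n)) :=
  SimpleGraph.fromRel (fun p q => q = p + 1 ∨ q = p + (n : ZMod (2 * n)))

open Classical in
/-- The Laplacian matrix `L = D − A` of a finite graph. -/
noncomputable def lapMat (G : SimpleGraph V) [Fintype V] : Matrix V V ℝ :=
  fun i j =>
    (if i = j then ∑ k : V, (if G.Adj i k then (1 : ℝ) else 0) else 0) -
      (if G.Adj i j then 1 else 0)

/-- `λ₁ G` : the smallest non-zero eigenvalue of the Laplacian matrix of `G`. -/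
noncomputable def lambdaOne (G : SimpleGraph V) [Fintype V] : ℝ :=
  sInf {t : ℝ | t ≠ 0 ∧ ∃ v : V → ℝ, v ≠ 0 ∧ (lapMat G).mulVec v = t • v}

noncomputable instance fintypeNeighborSetOfFinite [Finite V] (G : SimpleGraph V) (v : V) :
    Fintype (G.neighborSet v) := Fintype.ofFinite _

/-!
For an edge `xy` of a cubic graph, matching the neighbourhoods of `x` and `y` along a triangle
`xyz` gives `W₁ ≤ 2/3`, and along a square `x u v y` gives `W₁ ≤ 1`. Conversely, weak Kantorovich
duality with small integer-valued potentials gives `W₁ ≥ 1` when `x` and `y` have no common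
neighbour, and `W₁ ≥ 4/3` when moreover `xy` lies on no square. Hence `κ₀ ≡ 0` says exactly that
the graph is triangle-free and every edge lies on a square.

Such a graph is swept out by a ladder. If, beyond one rung of a square, the third neighbours of
its two ends are adjacent, then so are those beyond the other rung (a case analysis of the
squares through the nearby edges), and some square extends in this way at all; so rungs can be
added forever. In a finite graph the ladder meets itself; by minimality the first coincidence
makes whole rungs repeat after `j` steps, either straight (the prism `Y_j`, with `j ≥ 4` as there
are no triangles) or twisted (the Möbius ladder `M_j`, `j ≥ 3`). Conversely, prisms and Möbius
ladders are swept out by such ladders.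
-/

open SimpleGraph

namespace SimpleGraph

variable {G : SimpleGraph V}

variable (G) in
def EdgeOnSquare (x y : V) : Prop :=
  ∃ u v, G.Adj x u ∧ G.Adj y v ∧ G.Adj u v ∧ u ≠ y ∧ v ≠ x

theorem Iso.edgeOnSquare {W : Type*} {H : SimpleGraph W} (e : G ≃g H) {x y : V}
    (h : H.EdgeOnSquare (e x) (e y)) : G.EdgeOnSquare x y := by
  obtain ⟨u, v, hu, hv, huv, huy, hvx⟩ := h
  refine ⟨e.symm u, e.symm v, ?_, ?_, e.symm.map_adj_iff.2 huv, ?_, ?_⟩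
  · simpa using e.symm.map_adj_iff.2 hu
  · simpa using e.symm.map_adj_iff.2 hv
  · rintro rfl; simp at huy
  · rintro rfl; simp at hvx

theorem mem_of_neighborSet_eq {v a b c w : V} (h : G.neighborSet v = {a, b, c})
    (hw : G.Adj v w) : w = a ∨ w = b ∨ w = c := by
  have hw' : w ∈ G.neighborSet v := hw
  simpa [h] using hw'

theorem Hom.nonempty_iso_of_injective {W : Type*} [Nonempty W] {H : SimpleGraph W}
    (f : H →g G) (hf : Function.Injective f)
    (hlift : ∀ w v, G.Adj (f w) v → ∃ w', H.Adj w w' ∧ f w' = v) (hconn : G.Connected) :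
    Nonempty (G ≃g H) := by
  have hsurj : Function.Surjective f := by
    intro v
    by_contra hv
    obtain ⟨w⟩ := ‹Nonempty W›
    obtain ⟨d, -, ⟨w, hw⟩, hd⟩ := (hconn.preconnected (f w) v).some.exists_boundary_dart
      (Set.range f) ⟨w, rfl⟩ (by simpa using hv)
    obtain ⟨w', -, hw'⟩ := hlift w d.snd (hw ▸ d.adj)
    exact hd ⟨w', hw'⟩
  refine ⟨(RelIso.mk (Equiv.ofBijective f ⟨hf, hsurj⟩) fun {a b} ↦ ⟨fun h ↦ ?_, f.map_adj⟩).symm⟩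
  obtain ⟨b', hb', he⟩ := hlift a _ h
  rwa [hf he] at hb'

end SimpleGraph

section Wasserstein

variable {G : SimpleGraph V} [∀ v, Fintype (G.neighborSet v)] {x y : V}

structure IsCoupling (G : SimpleGraph V) [∀ v, Fintype (G.neighborSet v)] (x y : V)
    (π : V → V → ℝ) : Prop where
  nonneg : ∀ u v, 0 ≤ π u v
  adj_of_ne_zero : ∀ u v, π u v ≠ 0 → G.Adj x u ∧ G.Adj y v
  sum_right : ∀ u, ∑ v ∈ G.neighborFinset y, π u v = muZero G x u
  sum_left : ∀ v, ∑ u ∈ G.neighborFinset x, π u v = muZero G y v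

noncomputable def transportCost (G : SimpleGraph V) [∀ v, Fintype (G.neighborSet v)]
    (x y : V) (π : V → V → ℝ) : ℝ :=
  ∑ u ∈ G.neighborFinset x, ∑ v ∈ G.neighborFinset y, (G.dist u v : ℝ) * π u v

theorem wone_eq_sInf :
    Wone G x y = sInf (transportCost G x y '' {π | IsCoupling G x y π}) := by
  unfold Wone
  congr 1
  ext w
  constructor
  · rintro ⟨π, h₁, h₂, h₃, h₄, rfl⟩
    exact ⟨π, ⟨h₁, h₂, h₃, h₄⟩, rfl⟩
  · rintro ⟨π, ⟨h₁, h₂, h₃, h₄⟩, rfl⟩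
    exact ⟨π, h₁, h₂, h₃, h₄, rfl⟩

theorem IsCoupling.transportCost_nonneg {π : V → V → ℝ} (hπ : IsCoupling G x y π) :
    0 ≤ transportCost G x y π :=
  Finset.sum_nonneg fun u _ ↦ Finset.sum_nonneg fun v _ ↦
    mul_nonneg (Nat.cast_nonneg _) (hπ.nonneg u v)

theorem wone_le_transportCost {π : V → V → ℝ} (hπ : IsCoupling G x y π) :
    Wone G x y ≤ transportCost G x y π := by
  rw [wone_eq_sInf]
  refine csInf_le ⟨0, ?_⟩ ⟨π, hπ, rfl⟩
  rintro _ ⟨π', hπ', rfl⟩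
  exact hπ'.transportCost_nonneg

theorem muZero_of_adj {u : V} (h : G.Adj x u) : muZero G x u = (G.degree x : ℝ)⁻¹ := by
  simp [muZero, h]

theorem muZero_of_not_adj {u : V} (h : ¬ G.Adj x u) : muZero G x u = 0 := by
  simp [muZero, h]

theorem muZero_nonneg (u : V) : 0 ≤ muZero G x u := by
  unfold muZero
  split_ifs <;> positivity

theorem sum_mul_muZero (f : V → ℝ) :
    ∑ u ∈ G.neighborFinset x, f u * muZero G x u =
      (∑ u ∈ G.neighborFinset x, f u) / G.degree x := by
  rw [Finset.sum_div]
  refine Finset.sum_congr rfl fun u hu ↦ ?_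
  rw [muZero_of_adj ((mem_neighborFinset _ _ _).1 hu), div_eq_mul_inv]

theorem sum_muZero (hx : G.degree x ≠ 0) : ∑ u ∈ G.neighborFinset x, muZero G x u = 1 := by
  simpa [card_neighborFinset_eq_degree, hx] using sum_mul_muZero (G := G) (x := x) fun _ ↦ 1

theorem isCoupling_mul (hx : G.degree x ≠ 0) (hy : G.degree y ≠ 0) :
    IsCoupling G x y fun u v ↦ muZero G x u * muZero G y v where
  nonneg u v := mul_nonneg (muZero_nonneg u) (muZero_nonneg v)
  adj_of_ne_zero u v h := by
    by_contra hadj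
    rcases not_and_or.1 hadj with hu | hv
    · exact h (by rw [muZero_of_not_adj hu, zero_mul])
    · exact h (by rw [muZero_of_not_adj hv, mul_zero])
  sum_right u := by rw [← Finset.mul_sum, sum_muZero hy, mul_one]
  sum_left v := by rw [← Finset.sum_mul, sum_muZero hx, one_mul]

theorem le_wone {c : ℝ} (hx : G.degree x ≠ 0) (hy : G.degree y ≠ 0)
    (h : ∀ π, IsCoupling G x y π → c ≤ transportCost G x y π) : c ≤ Wone G x y := by
  rw [wone_eq_sInf]
  refine le_csInf ⟨_, _, isCoupling_mul hx hy, rfl⟩ ?_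
  rintro _ ⟨π, hπ, rfl⟩
  exact h π hπ

/-- Weak Kantorovich duality. -/
theorem IsCoupling.sub_le_transportCost {π : V → V → ℝ} (hπ : IsCoupling G x y π) {f : V → ℝ}
    (hf : ∀ u v, G.Adj x u → G.Adj y v → f u - f v ≤ G.dist u v) :
    ∑ u ∈ G.neighborFinset x, f u * muZero G x u -
      ∑ v ∈ G.neighborFinset y, f v * muZero G y v ≤ transportCost G x y π := by
  have hpair (u v : V) : (f u - f v) * π u v ≤ G.dist u v * π u v := by
    by_cases h0 : π u v = 0
    · simp [h0]
    obtain ⟨hu, hv⟩ := hπ.adj_of_ne_zero u v h0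
    exact mul_le_mul_of_nonneg_right (hf u v hu hv) (hπ.nonneg u v)
  calc ∑ u ∈ G.neighborFinset x, f u * muZero G x u -
        ∑ v ∈ G.neighborFinset y, f v * muZero G y v
      = ∑ u ∈ G.neighborFinset x, ∑ v ∈ G.neighborFinset y, (f u - f v) * π u v := by
        simp_rw [sub_mul, Finset.sum_sub_distrib, ← Finset.mul_sum, hπ.sum_right]
        rw [Finset.sum_comm]
        simp_rw [← Finset.mul_sum, hπ.sum_left]
    _ ≤ transportCost G x y π :=
        Finset.sum_le_sum fun u _ ↦ Finset.sum_le_sum fun v _ ↦ hpair u v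

theorem le_wone_of_lipschitz (hx : G.degree x ≠ 0) (hy : G.degree y ≠ 0) {f : V → ℝ}
    (hf : ∀ u v, G.Adj x u → G.Adj y v → f u - f v ≤ G.dist u v) :
    ∑ u ∈ G.neighborFinset x, f u * muZero G x u -
      ∑ v ∈ G.neighborFinset y, f v * muZero G y v ≤ Wone G x y :=
  le_wone hx hy fun _ hπ ↦ hπ.sub_le_transportCost hf

theorem wone_le_of_bijOn {σ : V → V} (hσ : Set.BijOn σ (G.neighborSet x) (G.neighborSet y)) :
    Wone G x y ≤ (∑ u ∈ G.neighborFinset x, (G.dist u (σ u) : ℝ)) / G.degree x := by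
  classical
  have hdeg : G.degree y = G.degree x := by
    simp only [← card_neighborFinset_eq_degree]
    refine (Finset.card_nbij σ ?_ ?_ ?_).symm <;> simp only [coe_neighborFinset]
    exacts [hσ.mapsTo, hσ.injOn, hσ.surjOn]
  set π : V → V → ℝ := fun u v ↦ if G.Adj x u ∧ σ u = v then (G.degree x : ℝ)⁻¹ else 0
  have hπ : IsCoupling G x y π := by
    refine ⟨fun u v ↦ by positivity, fun u v h ↦ ?_, fun u ↦ ?_, fun v ↦ ?_⟩
    · obtain ⟨hu, rfl⟩ := (ite_ne_right_iff.1 h).1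
      exact ⟨hu, hσ.mapsTo hu⟩
    · by_cases hu : G.Adj x u
      · simp [π, hu, muZero_of_adj hu, (mem_neighborFinset _ _ _).2 (hσ.mapsTo hu)]
      · simp [π, hu, muZero_of_not_adj hu]
    · by_cases hv : G.Adj y v
      · obtain ⟨u, hu : G.Adj x u, rfl⟩ := hσ.surjOn hv
        rw [muZero_of_adj hv, hdeg,
          Finset.sum_eq_single_of_mem u ((mem_neighborFinset _ _ _).2 hu)]
        · simp [π, hu]
        · intro u' hu' hne
          exact if_neg fun h ↦ hne (hσ.injOn ((mem_neighborFinset _ _ _).1 hu') hu h.2)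
      · rw [muZero_of_not_adj hv]
        refine Finset.sum_eq_zero fun u hu ↦ if_neg ?_
        rintro ⟨hu, rfl⟩
        exact hv (hσ.mapsTo hu)
  refine (wone_le_transportCost hπ).trans_eq ?_
  rw [transportCost, Finset.sum_div]
  refine Finset.sum_congr rfl fun u hu ↦ ?_
  have hu' := (mem_neighborFinset _ _ _).1 hu
  rw [Finset.sum_eq_single_of_mem (σ u) ((mem_neighborFinset _ _ _).2 (hσ.mapsTo hu'))]
  · simp [π, hu', div_eq_mul_inv]
  · intro v _ hne
    simp [π, Ne.symm hne]

end Wasserstein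

section Cubic

variable {G : SimpleGraph V} [∀ v, Fintype (G.neighborSet v)] {x y : V}

theorem exists_neighborSet_eq_of_degree_eq_three {v p q : V} (hv : G.degree v = 3)
    (hp : G.Adj v p) (hq : G.Adj v q) (hpq : p ≠ q) :
    ∃ r, r ≠ p ∧ r ≠ q ∧ G.neighborSet v = {p, q, r} := by
  classical
  have hcard : (((G.neighborFinset v).erase p).erase q).card = 1 := by
    rw [Finset.card_erase_of_mem, Finset.card_erase_of_mem, card_neighborFinset_eq_degree, hv]
    · simpa
    · simpa [hpq.symm]
  obtain ⟨r, hr⟩ := Finset.card_eq_one.1 hcard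
  have hmem : ∀ t, t ∈ ((G.neighborFinset v).erase p).erase q ↔ t = r := by simp [hr]
  simp only [Finset.mem_erase, mem_neighborFinset] at hmem
  obtain ⟨hrq, hrp, -⟩ := (hmem r).2 rfl
  refine ⟨r, hrp, hrq, Set.ext fun t ↦ ?_⟩
  simp only [mem_neighborSet, Set.mem_insert_iff, Set.mem_singleton_iff]
  by_cases htp : t = p; · simp [htp, hp]
  by_cases htq : t = q; · simp [htq, hq]
  simp [htp, htq, ← hmem t]

theorem wone_le_of_adj_of_adj (hx : G.degree x = 3) (hy : G.degree y = 3) (hxy : G.Adj x y)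
    {u v : V} (hu : G.Adj x u) (hv : G.Adj y v) (huy : u ≠ y) (hvx : v ≠ x) :
    Wone G x y ≤ (G.dist u v + 2) / 3 := by
  classical
  obtain ⟨u', hu'y, hu'u, hNx⟩ := exists_neighborSet_eq_of_degree_eq_three hx hxy hu huy.symm
  obtain ⟨v', hv'x, hv'v, hNy⟩ :=
    exists_neighborSet_eq_of_degree_eq_three hy hxy.symm hv hvx.symm
  have hxu' : G.Adj x u' := by simp [← mem_neighborSet, hNx]
  have hyv' : G.Adj y v' := by simp [← mem_neighborSet, hNy]
  -- match `u ↦ v`, `y ↦ v'`, `u' ↦ x`: the last two pairs are edges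
  set σ : V → V := fun t ↦ if t = u then v else if t = y then v' else x
  have hσ : Set.BijOn σ (G.neighborSet x) (G.neighborSet y) := by
    rw [hNx, hNy]
    refine ⟨?_, ?_, ?_⟩
    · rintro t (rfl | rfl | rfl) <;> simp [σ, huy.symm, hu'y, hu'u]
    · rintro a (rfl | rfl | rfl) b (rfl | rfl | rfl) h <;>
        simp_all [σ, huy.symm, hv'x.symm, hv'v.symm, hvx.symm]
    · rintro t (rfl | rfl | rfl)
      exacts [⟨u', by simp [σ, hu'y, hu'u]⟩, ⟨u, by simp [σ]⟩, ⟨y, by simp [σ, huy.symm]⟩]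
  have hNx' : G.neighborFinset x = {y, u, u'} := by
    rw [← Finset.coe_inj, coe_neighborFinset, hNx]; simp
  refine (wone_le_of_bijOn hσ).trans_eq ?_
  rw [hNx', Finset.sum_insert (by simp [huy.symm, hu'y.symm]),
    Finset.sum_insert (by simp [hu'u.symm]), Finset.sum_singleton, hx]
  have hσy : σ y = v' := by simp [σ, huy.symm]
  have hσu' : σ u' = x := by simp [σ, hu'u, hu'y]
  simp only [hσy, hσu', σ, if_pos rfl, dist_eq_one_iff_adj.2 hyv',
    dist_eq_one_iff_adj.2 hxu'.symm]
  push_cast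
  ring

theorem one_le_wone (hx : G.degree x ≠ 0) (hy : G.degree y ≠ 0) (hxy : G.Adj x y)
    (hT : ∀ z, G.Adj x z → ¬ G.Adj y z) : 1 ≤ Wone G x y := by
  classical
  have key := le_wone_of_lipschitz hx hy (f := fun t ↦ if G.Adj x t then 1 else 0) ?_
  · rwa [Finset.sum_congr rfl fun u hu ↦ by
        rw [if_pos ((mem_neighborFinset _ _ _).1 hu), one_mul],
      sum_muZero hx, Finset.sum_eq_zero fun v hv ↦ by
        rw [if_neg fun h ↦ hT v h ((mem_neighborFinset _ _ _).1 hv), zero_mul], sub_zero] at key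
  intro u v hu hv
  have hne : u ≠ v := by rintro rfl; exact hT u hu hv
  have hdist : 0 < G.dist u v :=
    (hu.symm.reachable.trans (hxy.reachable.trans hv.reachable)).pos_dist_of_ne hne
  rw [if_pos hu, if_neg fun h ↦ hT v h hv, sub_zero]
  exact_mod_cast hdist

theorem two_sub_le_wone (hx : G.degree x ≠ 0) (hy : G.degree y ≠ 0) (hxy : G.Adj x y)
    (hT : ∀ z, G.Adj x z → ¬ G.Adj y z) (hS : ¬ G.EdgeOnSquare x y) :
    2 - 1 / (G.degree x : ℝ) - 1 / (G.degree y : ℝ) ≤ Wone G x y := by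
  classical
  -- `f` is `2` on the neighbours of `x` other than `y`, `1` on `x` and `y`, `0` elsewhere
  set f : V → ℝ := fun t ↦ (if G.Adj x t then 2 else 0) - (if t = y then 1 else 0) +
    (if t = x then 1 else 0)
  have hfx {u : V} (hu : G.Adj x u) : f u = 2 - if u = y then 1 else 0 := by
    simp [f, hu, hu.ne']
  have hfy {v : V} (hv : G.Adj y v) : f v = if v = x then 1 else 0 := by
    have : ¬ G.Adj x v := fun h ↦ hT v h hv
    simp [f, this, hv.ne']
  have key := le_wone_of_lipschitz hx hy (f := f) ?_
  · rw [sum_mul_muZero, sum_mul_muZero,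
      Finset.sum_congr rfl fun u hu ↦ hfx ((mem_neighborFinset _ _ _).1 hu),
      Finset.sum_congr rfl fun v hv ↦ hfy ((mem_neighborFinset _ _ _).1 hv),
      Finset.sum_sub_distrib, Finset.sum_ite_eq', Finset.sum_ite_eq',
      if_pos ((mem_neighborFinset _ _ _).2 hxy),
      if_pos ((mem_neighborFinset _ _ _).2 hxy.symm),
      Finset.sum_const, card_neighborFinset_eq_degree] at key
    have hx' : (G.degree x : ℝ) ≠ 0 := by exact_mod_cast hx
    convert key using 2
    field_simp
    ring
  intro u v hu hv
  rw [hfx hu, hfy hv]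
  by_cases hvx : v = x
  · rw [if_pos hvx, hvx, SimpleGraph.dist_comm, dist_eq_one_iff_adj.2 hu]
    split_ifs <;> norm_num
  by_cases huy : u = y
  · rw [if_pos huy, if_neg hvx, huy, dist_eq_one_iff_adj.2 hv]
    norm_num
  have hne : u ≠ v := by rintro rfl; exact hT u hu hv
  have hreach : G.Reachable u v := hu.symm.reachable.trans (hxy.reachable.trans hv.reachable)
  have hnadj : G.dist u v ≠ 1 := fun h ↦ hS ⟨u, v, hu, hv, dist_eq_one_iff_adj.1 h, huy, hvx⟩
  have h2 : 2 ≤ G.dist u v := by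
    have := hreach.pos_dist_of_ne hne
    omega
  rw [if_neg huy, if_neg hvx]
  norm_num
  exact_mod_cast h2

theorem kappaZero_eq_zero_iff (hx : G.degree x = 3) (hy : G.degree y = 3) (hxy : G.Adj x y) :
    kappaZero G x y = 0 ↔ (∀ z, G.Adj x z → ¬ G.Adj y z) ∧ G.EdgeOnSquare x y := by
  have hx0 : G.degree x ≠ 0 := by omega
  have hy0 : G.degree y ≠ 0 := by omega
  rw [kappaZero, sub_eq_zero]
  constructor
  · intro hW
    have hT : ∀ z, G.Adj x z → ¬ G.Adj y z := by
      intro z hxz hyz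
      have hle := wone_le_of_adj_of_adj hx hy hxy hxz hyz hyz.ne' hxz.ne'
      rw [dist_self] at hle
      norm_num at hle
      linarith
    refine ⟨hT, by_contra fun hS ↦ ?_⟩
    have hge := two_sub_le_wone hx0 hy0 hxy hT hS
    rw [hx, hy] at hge
    norm_num at hge
    linarith
  · rintro ⟨hT, u, v, hu, hv, huv, huy, hvx⟩
    refine le_antisymm (one_le_wone hx0 hy0 hxy hT) ?_
    have hle := wone_le_of_adj_of_adj hx hy hxy hu hv huy hvx
    rw [dist_eq_one_iff_adj.2 huv] at hle
    norm_num at hle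
    exact hle

theorem forall_kappaZero_eq_zero_iff (hcubic : ∀ v, G.degree v = 3) :
    (∀ x y, G.Adj x y → kappaZero G x y = 0) ↔
      G.CliqueFree 3 ∧ ∀ x y, G.Adj x y → G.EdgeOnSquare x y := by
  classical
  have key {x y : V} (h : G.Adj x y) := kappaZero_eq_zero_iff (hcubic x) (hcubic y) h
  refine ⟨fun h ↦ ⟨fun s hs ↦ ?_, fun x y hxy ↦ ((key hxy).1 (h x y hxy)).2⟩,
    fun ⟨hT, hS⟩ x y hxy ↦ (key hxy).2 ⟨fun z hxz hyz ↦ ?_, hS x y hxy⟩⟩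
  · obtain ⟨a, b, c, hab, hac, hbc, -⟩ := is3Clique_iff.1 hs
    exact ((key hab).1 (h a b hab)).1 c hac hbc
  · exact G.isIndepSet_neighborSet_of_triangleFree hT x hxy hxz hyz.ne hyz

end Cubic

section Ladder

variable {G : SimpleGraph V}

/- A column `P : Bool → V` is a rung when `P false ∼ P true`. `IsRungSquare G P Q` says that the
rungs `P` and `Q` span the 4-cycle `P false, Q false, Q true, P true`; then `nextColumn G P Q`
consists of the third neighbours of `Q false` and `Q true` beyond it, and `nextColumn G Q P` is
the column behind `P`. -/

def IsRung (G : SimpleGraph V) (P : Bool → V) : Prop :=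
  G.Adj (P false) (P true)

theorem IsRung.adj {P : Bool → V} (h : IsRung G P) (c : Bool) : G.Adj (P c) (P (!c)) := by
  cases c
  exacts [h, h.symm]

theorem isRung_of_adj {P : Bool → V} {c : Bool} (h : G.Adj (P c) (P (!c))) :
    IsRung G P := by
  cases c
  exacts [h, h.symm]

structure IsRungSquare (G : SimpleGraph V) (P Q : Bool → V) : Prop where
  rung_left : IsRung G P
  rung_right : IsRung G Q
  adj : ∀ c, G.Adj (P c) (Q c)
  ne : ∀ c, P c ≠ Q (!c)

theorem IsRungSquare.symm {P Q : Bool → V} (h : IsRungSquare G P Q) : IsRungSquare G Q P :=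
  ⟨h.rung_right, h.rung_left, fun c ↦ (h.adj c).symm,
    fun c ↦ by simpa using (h.ne (!c)).symm⟩

noncomputable def thirdNeighbor (G : SimpleGraph V) (v p q : V) : V :=
  have : Nonempty V := ⟨v⟩
  Classical.epsilon fun r ↦ G.Adj v r ∧ r ≠ p ∧ r ≠ q

noncomputable def nextColumn (G : SimpleGraph V) (P Q : Bool → V) : Bool → V :=
  fun c ↦ thirdNeighbor G (Q c) (P c) (Q (!c))

variable [∀ v, Fintype (G.neighborSet v)] (hcubic : ∀ v, G.degree v = 3)
include hcubic

theorem neighborSet_eq_of_adj {v a b c : V} (ha : G.Adj v a) (hb : G.Adj v b)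
    (hc : G.Adj v c) (hab : a ≠ b) (hac : a ≠ c) (hbc : b ≠ c) :
    G.neighborSet v = {a, b, c} := by
  obtain ⟨r, hra, hrb, hN⟩ := exists_neighborSet_eq_of_degree_eq_three (hcubic v) ha hb hab
  rcases mem_of_neighborSet_eq hN hc with rfl | rfl | rfl
  exacts [absurd rfl hac, absurd rfl hbc, hN]

theorem thirdNeighbor_spec {v p q : V} (hp : G.Adj v p) (hq : G.Adj v q) (hpq : p ≠ q) :
    G.Adj v (thirdNeighbor G v p q) ∧ thirdNeighbor G v p q ≠ p ∧
      thirdNeighbor G v p q ≠ q := by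
  obtain ⟨r, hrp, hrq, hN⟩ := exists_neighborSet_eq_of_degree_eq_three (hcubic v) hp hq hpq
  unfold thirdNeighbor
  exact Classical.epsilon_spec (p := fun r ↦ G.Adj v r ∧ r ≠ p ∧ r ≠ q)
    ⟨r, by simp [← mem_neighborSet, hN], hrp, hrq⟩

theorem eq_thirdNeighbor {v p q w : V} (hp : G.Adj v p) (hq : G.Adj v q) (hpq : p ≠ q)
    (hw : G.Adj v w) (hwp : w ≠ p) (hwq : w ≠ q) : w = thirdNeighbor G v p q := by
  obtain ⟨ht, htp, htq⟩ := thirdNeighbor_spec hcubic hp hq hpq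
  rcases mem_of_neighborSet_eq (neighborSet_eq_of_adj hcubic hp hq ht hpq htp.symm htq.symm) hw
    with h | h | h
  exacts [absurd h hwp, absurd h hwq, h]

theorem thirdNeighbor_comm {v p q : V} (hp : G.Adj v p) (hq : G.Adj v q) (hpq : p ≠ q) :
    thirdNeighbor G v p q = thirdNeighbor G v q p := by
  obtain ⟨ht, htp, htq⟩ := thirdNeighbor_spec hcubic hp hq hpq
  exact eq_thirdNeighbor hcubic hq hp hpq.symm ht htq htp

namespace IsRungSquare

variable {P Q : Bool → V} (h : IsRungSquare G P Q)
include h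

theorem nextColumn_spec (c : Bool) :
    G.Adj (Q c) (nextColumn G P Q c) ∧ nextColumn G P Q c ≠ P c ∧
      nextColumn G P Q c ≠ Q (!c) ∧
      G.neighborSet (Q c) = {P c, Q (!c), nextColumn G P Q c} := by
  obtain ⟨ht, htp, htq⟩ :=
    thirdNeighbor_spec hcubic (h.adj c).symm (h.rung_right.adj c) (h.ne c)
  exact ⟨ht, htp, htq, neighborSet_eq_of_adj hcubic (h.adj c).symm (h.rung_right.adj c) ht
    (h.ne c) htp.symm htq.symm⟩

theorem isRungSquare_nextColumn (hN : IsRung G (nextColumn G P Q)) :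
    IsRungSquare G Q (nextColumn G P Q) :=
  ⟨h.rung_right, hN, fun c ↦ (h.nextColumn_spec hcubic c).1,
    fun c ↦ by simpa using ((h.nextColumn_spec hcubic (!c)).2.2.1).symm⟩

theorem nextColumn_nextColumn : nextColumn G (nextColumn G P Q) Q = P := by
  funext c
  obtain ⟨hQN, hNP, hNQ, -⟩ := h.nextColumn_spec hcubic c
  exact (eq_thirdNeighbor hcubic hQN (h.rung_right.adj c) hNQ (h.adj c).symm hNP.symm
    (h.ne c)).symm

variable (hS : ∀ x y, G.Adj x y → G.EdgeOnSquare x y)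
include hS

theorem adj_nextColumn_or (c : Bool) :
    G.Adj (nextColumn G P Q c) (nextColumn G P Q (!c)) ∨
      nextColumn G P Q c = nextColumn G Q P (!c) ∨
      G.Adj (nextColumn G P Q c) (nextColumn G Q P c) := by
  obtain ⟨hQN, hNP, hNQ, hQ⟩ := h.nextColumn_spec hcubic c
  obtain ⟨-, -, -, hQ'⟩ := h.nextColumn_spec hcubic (!c)
  obtain ⟨-, -, -, hP⟩ := h.symm.nextColumn_spec hcubic c
  obtain ⟨-, -, -, hP'⟩ := h.symm.nextColumn_spec hcubic (!c)
  simp only [Bool.not_not] at hQ' hP'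
  have hback :
      G.Adj (nextColumn G P Q c) (P (!c)) → nextColumn G P Q c = nextColumn G Q P (!c) :=
    fun hadj ↦ ((mem_of_neighborSet_eq hP' hadj.symm).resolve_left hNQ).resolve_left hNP
  -- a square on the edge `Q c – nextColumn G P Q c` returns through `P c` or `Q (!c)`
  obtain ⟨u, v, hu, hv, huv, hu_ne, hv_ne⟩ := hS _ _ hQN
  rcases mem_of_neighborSet_eq hQ hu with rfl | rfl | rfl
  · rcases mem_of_neighborSet_eq hP huv with rfl | rfl | rfl
    exacts [absurd rfl hv_ne, Or.inr (Or.inl (hback hv)), Or.inr (Or.inr hv)]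
  · rcases mem_of_neighborSet_eq hQ' huv with rfl | rfl | rfl
    exacts [Or.inr (Or.inl (hback hv)), absurd rfl hv_ne, Or.inl hv]
  · exact absurd rfl hu_ne

theorem isRung_nextColumn_of_eq (c : Bool) (h₁ : nextColumn G P Q c = nextColumn G Q P (!c))
    (h₂ : nextColumn G P Q (!c) = nextColumn G Q P c) : IsRung G (nextColumn G P Q) := by
  obtain ⟨hQN, hNP, hNQ, hQ⟩ := h.nextColumn_spec hcubic c
  obtain ⟨-, -, -, hQ'⟩ := h.nextColumn_spec hcubic (!c)
  obtain ⟨-, -, -, hP⟩ := h.symm.nextColumn_spec hcubic c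
  obtain ⟨hPR', -, -, hP'⟩ := h.symm.nextColumn_spec hcubic (!c)
  simp only [Bool.not_not] at hQ' hP'
  rw [← h₁] at hPR' hP'
  obtain ⟨z, hzQ, hzP, hN⟩ := exists_neighborSet_eq_of_degree_eq_three (hcubic _) hQN.symm
    hPR'.symm (by simpa using (h.ne (!c)).symm)
  -- every square on the edge `nextColumn G P Q c – z` forces `z = nextColumn G P Q (!c)`
  have hz : G.Adj z (P c) ∨ G.Adj z (Q (!c)) → z = nextColumn G P Q (!c) := by
    rintro (hadj | hadj)
    · rcases mem_of_neighborSet_eq hP hadj.symm with rfl | rfl | hz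
      exacts [absurd rfl hzQ, absurd rfl hzP, hz.trans h₂.symm]
    · rcases mem_of_neighborSet_eq hQ' hadj.symm with rfl | rfl | hz
      exacts [absurd rfl hzP, absurd rfl hzQ, hz]
  have hNz : G.Adj (nextColumn G P Q c) z := by simp [← mem_neighborSet, hN]
  refine isRung_of_adj (c := c) ?_
  obtain ⟨u, v, hu, hv, huv, hu_ne, hv_ne⟩ := hS _ _ hNz
  rcases mem_of_neighborSet_eq hN hu with rfl | rfl | rfl
  · rcases mem_of_neighborSet_eq hQ huv with rfl | rfl | rfl
    exacts [hz (Or.inl hv) ▸ hNz, hz (Or.inr hv) ▸ hNz, absurd rfl hv_ne]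
  · rcases mem_of_neighborSet_eq hP' huv with rfl | rfl | rfl
    exacts [hz (Or.inr hv) ▸ hNz, hz (Or.inl hv) ▸ hNz, absurd rfl hv_ne]
  · exact absurd rfl hu_ne

theorem isRung_nextColumn_or :
    IsRung G (nextColumn G P Q) ∨
      ∀ c : Bool, G.Adj (nextColumn G P Q c) (nextColumn G Q P c) := by
  by_cases hN : IsRung G (nextColumn G P Q)
  · exact Or.inl hN
  refine Or.inr fun c ↦ ?_
  have hN' : ∀ c, ¬ G.Adj (nextColumn G P Q c) (nextColumn G P Q (!c)) :=
    fun c h ↦ hN (isRung_of_adj h)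
  have hN'' : ¬ G.Adj (nextColumn G P Q (!c)) (nextColumn G P Q c) := by simpa using hN' (!c)
  have h₂ := h.adj_nextColumn_or hcubic hS (!c)
  simp only [Bool.not_not] at h₂
  rcases h.adj_nextColumn_or hcubic hS c with h₁ | h₁ | h₁
  · exact absurd h₁ (hN' c)
  · rcases h₂ with h₂ | h₂ | h₂
    · exact absurd h₂ hN''
    · exact absurd (h.isRung_nextColumn_of_eq hcubic hS c h₁ h₂) hN
    · exact absurd (h₁ ▸ h₂) hN''
  · exact h₁

/-- A ladder that extends backwards from the square `P, Q` extends forwards as well. -/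
theorem isRung_nextColumn (hR : IsRung G (nextColumn G Q P)) :
    IsRung G (nextColumn G P Q) := by
  by_contra hN
  have hNR := (h.isRung_nextColumn_or hcubic hS).resolve_left hN
  have hN' : ∀ c, ¬ G.Adj (nextColumn G P Q c) (nextColumn G P Q (!c)) :=
    fun c h ↦ hN (isRung_of_adj h)
  set c := false
  obtain ⟨hQN, hNP, hNQ, hQ⟩ := h.nextColumn_spec hcubic c
  obtain ⟨-, -, -, hQ'⟩ := h.nextColumn_spec hcubic (!c)
  obtain ⟨hPR, hRQ, hRP', hP⟩ := h.symm.nextColumn_spec hcubic c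
  obtain ⟨hPR', -, hR'P, hP'⟩ := h.symm.nextColumn_spec hcubic (!c)
  simp only [Bool.not_not] at hQ' hP' hR'P
  have hNR' : nextColumn G P Q c ≠ nextColumn G Q P (!c) := fun he ↦
    hN' (!c) (by simpa [he] using (hNR (!c)))
  have hRc : G.neighborSet (nextColumn G Q P c) =
      {P c, nextColumn G P Q c, nextColumn G Q P (!c)} :=
    neighborSet_eq_of_adj hcubic hPR.symm (hNR c).symm (hR.adj c) hNP.symm hR'P.symm hNR'
  have hRc' : G.neighborSet (nextColumn G Q P (!c)) =
      {P (!c), nextColumn G P Q (!c), nextColumn G Q P c} := by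
    have hRR := hR.adj (!c)
    simp only [Bool.not_not] at hRR
    refine neighborSet_eq_of_adj hcubic hPR'.symm (hNR (!c)).symm hRR ?_ ?_ ?_
    · exact (h.nextColumn_spec hcubic (!c)).2.1.symm
    · exact hRP'.symm
    · intro he
      exact hN' c (by simpa [← he] using (hNR c))
  obtain ⟨w, hwQ, hwR, hN⟩ := exists_neighborSet_eq_of_degree_eq_three (hcubic _) hQN.symm
    (hNR c) hRQ.symm
  have hNw : G.Adj (nextColumn G P Q c) w := by simp [← mem_neighborSet, hN]
  have hwP' : w ≠ P (!c) := by
    rintro rfl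
    rcases mem_of_neighborSet_eq hP' hNw.symm with h₁ | h₁ | h₁
    exacts [hNQ h₁, hNP h₁, hNR' h₁]
  have hw : ¬ G.Adj w (P c) ∧ ¬ G.Adj w (Q (!c)) ∧ ¬ G.Adj w (nextColumn G Q P (!c)) := by
    refine ⟨fun hadj ↦ ?_, fun hadj ↦ ?_, fun hadj ↦ ?_⟩
    · rcases mem_of_neighborSet_eq hP hadj.symm with rfl | rfl | rfl
      exacts [hwQ rfl, hwP' rfl, hwR rfl]
    · rcases mem_of_neighborSet_eq hQ' hadj.symm with rfl | rfl | rfl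
      exacts [hwP' rfl, hwQ rfl, hN' c hNw]
    · rcases mem_of_neighborSet_eq hRc' hadj.symm with rfl | rfl | rfl
      exacts [hwP' rfl, hN' c hNw, hwR rfl]
  obtain ⟨u, v, hu, hv, huv, hu_ne, hv_ne⟩ := hS _ _ hNw
  rcases mem_of_neighborSet_eq hN hu with rfl | rfl | rfl
  · rcases mem_of_neighborSet_eq hQ huv with rfl | rfl | rfl
    exacts [hw.1 hv, hw.2.1 hv, hv_ne rfl]
  · rcases mem_of_neighborSet_eq hRc huv with rfl | rfl | rfl
    exacts [hw.1 hv, hv_ne rfl, hw.2.2 hv]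
  · exact hu_ne rfl

end IsRungSquare

variable (hS : ∀ x y, G.Adj x y → G.EdgeOnSquare x y)
include hS

theorem exists_isRungSquare_isRung_nextColumn [Nonempty V] :
    ∃ P Q, IsRungSquare G P Q ∧ IsRung G (nextColumn G P Q) := by
  obtain ⟨x⟩ := ‹Nonempty V›
  obtain ⟨y, hy⟩ : (G.neighborFinset x).Nonempty :=
    Finset.card_pos.1 (by rw [card_neighborFinset_eq_degree, hcubic]; norm_num)
  have hxy := (mem_neighborFinset _ _ _).1 hy
  obtain ⟨u, v, hxu, hyv, huv, huy, hvx⟩ := hS x y hxy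
  have h₁ : IsRungSquare G (fun c ↦ cond c u x) (fun c ↦ cond c v y) :=
    ⟨hxu, hyv, by rintro (_ | _); exacts [hxy, huv], by rintro (_ | _); exacts [hvx.symm, huy]⟩
  rcases h₁.isRung_nextColumn_or hcubic hS with hN | hNR
  · exact ⟨_, _, h₁, hN⟩
  -- otherwise the square turned by a quarter extends
  have h₂ : IsRungSquare G (fun c ↦ cond c y x) (fun c ↦ cond c v u) :=
    ⟨hxy, huv, by rintro (_ | _); exacts [hxu, hyv],
      by rintro (_ | _); exacts [hvx.symm, huy.symm]⟩
  refine ⟨_, _, h₂, ?_⟩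
  show G.Adj (thirdNeighbor G u x v) (thirdNeighbor G v y u)
  rw [thirdNeighbor_comm hcubic hxu.symm huv hvx.symm,
    thirdNeighbor_comm hcubic hyv.symm huv.symm huy.symm]
  exact (hNR true).symm

noncomputable def ladder (G : SimpleGraph V) (P Q : Bool → V) : ℕ → Bool → V
  | 0 => P
  | 1 => Q
  | k + 2 => nextColumn G (ladder G P Q k) (ladder G P Q (k + 1))

theorem isRungSquare_ladder {P Q : Bool → V} (h : IsRungSquare G P Q)
    (hN : IsRung G (nextColumn G P Q)) (k : ℕ) :
    IsRungSquare G (ladder G P Q k) (ladder G P Q (k + 1)) ∧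
      IsRung G (ladder G P Q (k + 2)) := by
  induction k with
  | zero => exact ⟨h, hN⟩
  | succ k ih =>
    obtain ⟨hk, hk₂⟩ := ih
    have hk' := hk.isRungSquare_nextColumn hcubic hk₂
    refine ⟨hk', hk'.isRung_nextColumn hcubic hS ?_⟩
    rw [hk.nextColumn_nextColumn hcubic]
    exact hk.rung_left

structure IsLadder (G : SimpleGraph V) (ψ : ℕ → Bool → V) : Prop where
  adj_rung : ∀ k c, G.Adj (ψ k c) (ψ k (!c))
  neighborSet_eq :
    ∀ k c, G.neighborSet (ψ (k + 1) c) = {ψ k c, ψ (k + 1) (!c), ψ (k + 2) c}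
  prev_ne_rung : ∀ k c, ψ k c ≠ ψ (k + 1) (!c)
  next_ne_prev : ∀ k c, ψ (k + 2) c ≠ ψ k c
  next_ne_rung : ∀ k c, ψ (k + 2) c ≠ ψ (k + 1) (!c)

theorem exists_isLadder [Nonempty V] : ∃ ψ, IsLadder G ψ := by
  obtain ⟨P, Q, h, hN⟩ := exists_isRungSquare_isRung_nextColumn hcubic hS
  have hsq k := (isRungSquare_ladder hcubic hS h hN k).1
  have hspec k c := (hsq k).nextColumn_spec hcubic c
  exact ⟨ladder G P Q, fun k ↦ (hsq k).rung_left.adj, fun k c ↦ (hspec k c).2.2.2,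
    fun k ↦ (hsq k).ne, fun k c ↦ (hspec k c).2.1, fun k c ↦ (hspec k c).2.2.1⟩

end Ladder

theorem exists_pos_add_eq [Finite V] (ψ : ℕ → Bool → V) :
    ∃ t, 0 < t ∧ ∃ a c c', 0 < a ∧ ψ (t + a) c' = ψ a c := by
  obtain ⟨x, y, hne, hxy⟩ := Finite.exists_ne_map_eq_of_infinite fun k ↦ ψ (k + 1) false
  rcases hne.lt_or_gt with h | h
  · exact ⟨y - x, by omega, x + 1, false, false, by omega, by rw [hxy]; congr 1; omega⟩
  · exact ⟨x - y, by omega, y + 1, false, false, by omega, by rw [← hxy]; congr 1; omega⟩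

namespace IsLadder

variable {G : SimpleGraph V} {ψ : ℕ → Bool → V} (hψ : IsLadder G ψ)
include hψ

theorem adj_succ (k : ℕ) (c : Bool) : G.Adj (ψ k c) (ψ (k + 1) c) := by
  have : ψ k c ∈ G.neighborSet (ψ (k + 1) c) := by simp [hψ.neighborSet_eq]
  exact this.symm

theorem eq_prev {k : ℕ} {c : Bool} {w : V} (hw : G.Adj (ψ (k + 1) c) w)
    (h₁ : w ≠ ψ (k + 1) (!c)) (h₂ : w ≠ ψ (k + 2) c) : w = ψ k c := by
  rcases mem_of_neighborSet_eq (hψ.neighborSet_eq k c) hw with h | h | h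
  exacts [h, absurd h h₁, absurd h h₂]

theorem eq_rung {k : ℕ} {c : Bool} {w : V} (hw : G.Adj (ψ (k + 1) c) w)
    (h₁ : w ≠ ψ k c) (h₂ : w ≠ ψ (k + 2) c) : w = ψ (k + 1) (!c) := by
  rcases mem_of_neighborSet_eq (hψ.neighborSet_eq k c) hw with h | h | h
  exacts [absurd h h₁, h, absurd h h₂]

theorem eq_next {k : ℕ} {c : Bool} {w : V} (hw : G.Adj (ψ (k + 1) c) w)
    (h₁ : w ≠ ψ k c) (h₂ : w ≠ ψ (k + 1) (!c)) : w = ψ (k + 2) c := by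
  rcases mem_of_neighborSet_eq (hψ.neighborSet_eq k c) hw with h | h | h
  exacts [absurd h h₁, absurd h h₂, h]

-- A flip `f = true` means that the shift by `j` exchanges the two rails.
theorem shift_eq_add_two {j k : ℕ} {f : Bool} (h₀ : ∀ c, ψ (j + k) (f ^^ c) = ψ k c)
    (h₁ : ∀ c, ψ (j + k + 1) (f ^^ c) = ψ (k + 1) c) (c : Bool) :
    ψ (j + k + 2) (f ^^ c) = ψ (k + 2) c := by
  have hadj := hψ.adj_succ (j + k + 1) (f ^^ c)
  rw [h₁] at hadj
  refine hψ.eq_next hadj ?_ ?_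
  · rw [← h₀]; exact hψ.next_ne_prev _ _
  · rw [← h₁, Bool.xor_not]; exact hψ.next_ne_rung _ _

theorem shift_eq_of_add_one {j k : ℕ} {f : Bool}
    (h₁ : ∀ c, ψ (j + k + 1) (f ^^ c) = ψ (k + 1) c)
    (h₂ : ∀ c, ψ (j + k + 2) (f ^^ c) = ψ (k + 2) c) (c : Bool) :
    ψ (j + k) (f ^^ c) = ψ k c := by
  have hadj := hψ.adj_succ (j + k) (f ^^ c)
  rw [h₁] at hadj
  refine hψ.eq_prev hadj.symm ?_ ?_
  · rw [← h₁, Bool.xor_not]; exact hψ.prev_ne_rung _ _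
  · rw [← h₂]; exact (hψ.next_ne_prev _ _).symm

theorem shift_eq_of_consecutive {j k₀ : ℕ} {f : Bool}
    (h₀ : ∀ c, ψ (j + k₀) (f ^^ c) = ψ k₀ c)
    (h₁ : ∀ c, ψ (j + k₀ + 1) (f ^^ c) = ψ (k₀ + 1) c) (k : ℕ) (c : Bool) :
    ψ (j + k) (f ^^ c) = ψ k c := by
  let M k := ∀ c, ψ (j + k) (f ^^ c) = ψ k c
  have back : ∀ m, M m ∧ M (m + 1) → M 0 ∧ M 1 := by
    intro m
    induction m with
    | zero => exact id
    | succ m ih => exact fun h ↦ ih ⟨hψ.shift_eq_of_add_one h.1 h.2, h.1⟩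
  have forth : ∀ m, M m ∧ M (m + 1) := by
    intro m
    induction m with
    | zero => exact back k₀ ⟨h₀, h₁⟩
    | succ m ih => exact ⟨ih.2, hψ.shift_eq_add_two ih.1 ih.2⟩
  exact (forth k).1 c

/-- If `j ≥ 3` is the least distance at which two vertices of the ladder (away from its first
column) coincide, then one such coincidence forces two consecutive columns to repeat. -/
theorem shift_eq_of_eq {j k : ℕ} {c c' : Bool} (hj : 3 ≤ j)
    (hmin : ∀ a b c c', 0 < a → a < b → b < j + a → ψ b c' ≠ ψ a c)
    (hcol : ψ (j + k + 1) c' = ψ (k + 1) c) :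
    ψ (j + k) c' = ψ k c ∧ ψ (j + k + 1) (!c') = ψ (k + 1) (!c) := by
  have hprev : ψ (j + k) c' = ψ k c := by
    have hadj := hψ.adj_succ (j + k) c'
    rw [hcol] at hadj
    exact hψ.eq_prev hadj.symm (hmin _ _ _ _ (by omega) (by omega) (by omega))
      (hmin _ _ _ _ (by omega) (by omega) (by omega))
  refine ⟨hprev, ?_⟩
  have hadj := hψ.adj_rung (j + k + 1) c'
  rw [hcol] at hadj
  refine hψ.eq_rung hadj ?_ (hmin _ _ _ _ (by omega) (by omega) (by omega))
  rw [← hprev]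
  exact (hψ.prev_ne_rung _ _).symm

theorem ne_add_one (k : ℕ) (c c' : Bool) : ψ (k + 1) c' ≠ ψ k c := by
  rcases Bool.eq_or_eq_not c' c with rfl | rfl
  · exact (hψ.adj_succ k c').ne'
  · exact (hψ.prev_ne_rung k c).symm

theorem ne_add_two (hT : G.CliqueFree 3) (k : ℕ) (c c' : Bool) : ψ (k + 2) c' ≠ ψ k c := by
  classical
  rcases Bool.eq_or_eq_not c' c with rfl | rfl
  · exact hψ.next_ne_prev k c'
  · intro h
    have h₁ := hψ.adj_succ (k + 1) (!c)
    rw [h] at h₁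
    exact hT {ψ k c, ψ k (!c), ψ (k + 1) (!c)} (is3Clique_triple_iff.2
      ⟨hψ.adj_rung k c, h₁.symm, hψ.adj_succ k (!c)⟩)

theorem four_le_of_shift_eq (hT : G.CliqueFree 3) {j : ℕ} (hj : 3 ≤ j)
    (hshift : ∀ k c, ψ (j + k) c = ψ k c) : 4 ≤ j := by
  classical
  by_contra hj₄
  have h₃ : ψ 3 false = ψ 0 false := by simpa [show j = 3 by omega] using hshift 0 false
  have h₂ := hψ.adj_succ 2 false
  rw [h₃] at h₂
  exact hT {ψ 0 false, ψ 1 false, ψ 2 false} (is3Clique_triple_iff.2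
    ⟨hψ.adj_succ 0 false, h₂.symm, hψ.adj_succ 1 false⟩)

theorem exists_shift_eq [Finite V] (hT : G.CliqueFree 3) :
    ∃ j f, 3 ≤ j ∧ (f = false → 4 ≤ j) ∧ (∀ k c, ψ (j + k) (f ^^ c) = ψ k c) ∧
      ∀ a b c c', a < b → b < j + a → ψ b c' ≠ ψ a c := by
  classical
  have hex := exists_pos_add_eq ψ
  set j := Nat.find hex
  obtain ⟨hj₀, k, c, c', hk, hcol⟩ : 0 < j ∧ ∃ a c c', 0 < a ∧ ψ (j + a) c' = ψ a c :=
    Nat.find_spec hex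
  have hmin : ∀ a b c c', 0 < a → a < b → b < j + a → ψ b c' ≠ ψ a c := by
    intro a b c c' ha hab hb h
    refine Nat.find_min hex (m := b - a) (by omega) ⟨by omega, a, c, c', ha, ?_⟩
    rwa [Nat.sub_add_cancel hab.le]
  have hj : 3 ≤ j := by
    by_contra hj
    obtain h | h : j = 1 ∨ j = 2 := by omega
    · exact hψ.ne_add_one k c c' (by rw [← hcol, h, add_comm])
    · exact hψ.ne_add_two hT k c c' (by rw [← hcol, h, add_comm])
  obtain ⟨k, rfl⟩ : ∃ k', k = k' + 1 := ⟨k - 1, by omega⟩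
  obtain ⟨h₀, h₁⟩ := hψ.shift_eq_of_eq hj hmin hcol
  obtain ⟨h₀', -⟩ := hψ.shift_eq_of_eq hj hmin h₁
  have hshift := hψ.shift_eq_of_consecutive (f := c' ^^ c) (k₀ := k)
    (fun d ↦ by rcases Bool.eq_or_eq_not d c with rfl | rfl <;> simpa)
    (fun d ↦ by rcases Bool.eq_or_eq_not d c with rfl | rfl <;> simpa)
  refine ⟨j, c' ^^ c, hj, fun hf ↦ hψ.four_le_of_shift_eq hT hj (by simpa [hf] using hshift),
    hshift, fun a b d d' hab hb h ↦ ?_⟩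
  refine hmin (j + a) (j + b) (c' ^^ c ^^ d) (c' ^^ c ^^ d') (by omega) (by omega) (by omega) ?_
  rw [hshift, hshift, h]

end IsLadder

theorem ZMod.natCast_ne_zero_of_lt {N a : ℕ} (ha : 0 < a) (h : a < N) : (a : ZMod N) ≠ 0 := by
  rw [Ne, ZMod.natCast_eq_zero_iff]
  exact Nat.not_dvd_of_pos_of_lt ha h

theorem ZMod.exists_natCast_add_one_eq {n : ℕ} [NeZero n] (i : ZMod n) :
    ∃ m : ℕ, ((m + 1 : ℕ) : ZMod n) = i :=
  ⟨n + i.val - 1, by rw [Nat.sub_add_cancel (by have := NeZero.pos n; omega)]; simp⟩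

theorem prismGraph_adj_rung {n : ℕ} (i : ZMod n) (c : Bool) :
    (prismGraph n).Adj (i, c) (i, !c) := by
  simp [prismGraph]

theorem mobiusLadder_adj_add {n : ℕ} (hn : (n : ZMod (2 * n)) ≠ 0) (i : ZMod (2 * n)) :
    (mobiusLadder n).Adj i (i + n) := by
  simp [mobiusLadder, hn]

theorem prismGraph_neighborSet {n : ℕ} (hn : (1 : ZMod n) ≠ 0) (i : ZMod n) (c : Bool) :
    (prismGraph n).neighborSet (i, c) = {(i - 1, c), (i, !c), (i + 1, c)} := by
  ext ⟨i', c'⟩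
  simp only [mem_neighborSet, prismGraph, SimpleGraph.fromRel_adj, ne_eq, Prod.mk.injEq,
    Set.mem_insert_iff, Set.mem_singleton_iff]
  constructor
  · rintro ⟨-, (⟨rfl, rfl⟩ | ⟨rfl, h⟩) | (⟨rfl, rfl⟩ | ⟨rfl, h⟩)⟩
    · simp
    · cases c <;> cases c' <;> simp_all
    · simp
    · cases c <;> cases c' <;> simp_all
  · rintro (⟨rfl, rfl⟩ | ⟨rfl, rfl⟩ | ⟨rfl, rfl⟩)
    · simpa using fun h ↦ hn (by linear_combination h)
    · simp
    · simp [hn]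

theorem mobiusLadder_neighborSet {n : ℕ} (h₁ : (1 : ZMod (2 * n)) ≠ 0)
    (hn : (n : ZMod (2 * n)) ≠ 0) (i : ZMod (2 * n)) :
    (mobiusLadder n).neighborSet i = {i - 1, i + n, i + 1} := by
  ext q
  have h2n : (n : ZMod (2 * n)) + n = 0 := by
    have := ZMod.natCast_self (2 * n)
    push_cast at this
    linear_combination this
  simp only [mem_neighborSet, mobiusLadder, SimpleGraph.fromRel_adj, ne_eq, Set.mem_insert_iff,
    Set.mem_singleton_iff]
  constructor
  · rintro ⟨-, (rfl | rfl) | (rfl | rfl)⟩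
    · simp
    · simp
    · simp
    · right; left; linear_combination -h2n
  · rintro (rfl | rfl | rfl)
    · exact ⟨fun h ↦ h₁ (by linear_combination h), Or.inr (Or.inl (by ring))⟩
    · simp [hn]
    · simp [h₁]

@[simp]
def prismColumns (n k : ℕ) (c : Bool) : ZMod n × Bool :=
  ((k : ZMod n), c)

@[simp]
def mobiusColumns (n k : ℕ) (c : Bool) : ZMod (2 * n) :=
  k + cond c (n : ZMod (2 * n)) 0

theorem exists_prismColumns_eq {n : ℕ} [NeZero n] (p : ZMod n × Bool) :
    ∃ k c, prismColumns n (k + 1) c = p :=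
  (ZMod.exists_natCast_add_one_eq p.1).imp fun _ hm ↦ ⟨p.2, by simp [hm]⟩

theorem exists_mobiusColumns_eq {n : ℕ} [NeZero (2 * n)] (i : ZMod (2 * n)) :
    ∃ k c, mobiusColumns n (k + 1) c = i :=
  (ZMod.exists_natCast_add_one_eq i).imp fun _ hm ↦ ⟨false, by simpa using hm⟩

theorem isLadder_prismColumns {n : ℕ} (hn : 3 ≤ n) : IsLadder (prismGraph n) (prismColumns n) := by
  have h₁ : (1 : ZMod n) ≠ 0 := by
    exact_mod_cast ZMod.natCast_ne_zero_of_lt one_pos (by omega)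
  have h₂ : (2 : ZMod n) ≠ 0 := by
    exact_mod_cast ZMod.natCast_ne_zero_of_lt two_pos (by omega)
  refine ⟨fun k c ↦ ?_, fun k c ↦ ?_, fun k c ↦ by simp, fun k c h ↦ ?_, fun k c ↦ by simp⟩
  · exact prismGraph_adj_rung _ _
  · simp only [prismColumns]
    rw [prismGraph_neighborSet h₁]
    push_cast
    congr 2 <;> ring_nf
  · exact h₂ (by simpa using h)

theorem isLadder_mobiusColumns {n : ℕ} (hn : 3 ≤ n) :
    IsLadder (mobiusLadder n) (mobiusColumns n) := by
  have hne (a : ℕ) (h : 0 < a) (h' : a < 2 * n) : (a : ZMod (2 * n)) ≠ 0 :=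
    ZMod.natCast_ne_zero_of_lt h h'
  have h₁ : (1 : ZMod (2 * n)) ≠ 0 := by exact_mod_cast hne 1 one_pos (by omega)
  have h₂ : (2 : ZMod (2 * n)) ≠ 0 := by exact_mod_cast hne 2 two_pos (by omega)
  have h₀ : (n : ZMod (2 * n)) ≠ 0 := hne n (by omega) (by omega)
  have hnp : (n : ZMod (2 * n)) + 1 ≠ 0 := by exact_mod_cast hne (n + 1) (by omega) (by omega)
  have hnm : (n : ZMod (2 * n)) - 1 ≠ 0 := by
    have := hne (n - 1) (by omega) (by omega)
    rwa [Nat.cast_sub (by omega), Nat.cast_one] at this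
  have h2n : (n : ZMod (2 * n)) + n = 0 := by
    have := ZMod.natCast_self (2 * n)
    push_cast at this
    linear_combination this
  refine ⟨fun k c ↦ ?_, fun k c ↦ ?_, fun k c h ↦ ?_, fun k c h ↦ ?_, fun k c h ↦ ?_⟩ <;>
    cases c <;>
    simp only [mobiusColumns, cond_true, cond_false, Bool.not_true, Bool.not_false, add_zero] at *
  · exact mobiusLadder_adj_add h₀ _
  · exact (mobiusLadder_adj_add h₀ _).symm
  · rw [mobiusLadder_neighborSet h₁ h₀]
    push_cast
    congr 2 <;> ring_nf
  · rw [mobiusLadder_neighborSet h₁ h₀]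
    push_cast
    congr 1
    · ring
    congr 1
    · linear_combination h2n
    · ring_nf
  · exact hnp (by push_cast at h; linear_combination -h)
  · exact hnm (by push_cast at h; linear_combination h)
  · exact h₂ (by push_cast at h; linear_combination h)
  · exact h₂ (by push_cast at h; linear_combination h)
  · exact hnm (by push_cast at h; linear_combination -h)
  · exact hnp (by push_cast at h; linear_combination h)

namespace IsLadder

variable {G : SimpleGraph V} {ψ : ℕ → Bool → V} (hψ : IsLadder G ψ)
include hψ

section

variable (hcover : ∀ v, ∃ k c, ψ (k + 1) c = v)
include hcover

theorem edgeOnSquare {x y : V} (hxy : G.Adj x y) : G.EdgeOnSquare x y := by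
  obtain ⟨k, c, rfl⟩ := hcover x
  have hk := hψ.prev_ne_rung k (!c)
  have hk₁ := hψ.next_ne_rung k (!c)
  simp only [Bool.not_not] at hk hk₁
  rcases mem_of_neighborSet_eq (hψ.neighborSet_eq k c) hxy with rfl | rfl | rfl
  · exact ⟨_, _, hψ.adj_rung _ _, hψ.adj_rung _ _, (hψ.adj_succ k (!c)).symm,
      (hψ.prev_ne_rung k c).symm, hk⟩
  · refine ⟨_, _, hψ.adj_succ (k + 1) c, ?_, hψ.adj_rung (k + 2) c, hψ.next_ne_rung k c, hk₁⟩
    simpa using hψ.adj_succ (k + 1) (!c)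
  · exact ⟨_, _, hψ.adj_rung _ _, hψ.adj_rung _ _, hψ.adj_succ (k + 1) (!c),
      (hψ.next_ne_rung k c).symm, hk₁⟩

theorem cliqueFree_three (h₂ : ∀ k c, ψ (k + 2) (!c) ≠ ψ k c)
    (h₃ : ∀ k c, ψ (k + 3) c ≠ ψ k c) : G.CliqueFree 3 := by
  have hpair : ∀ k c, ¬ G.Adj (ψ k c) (ψ (k + 1) (!c)) ∧ ¬ G.Adj (ψ k c) (ψ (k + 2) c) ∧
      ¬ G.Adj (ψ (k + 1) (!c)) (ψ (k + 2) c) := by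
    intro k c
    have hN := hψ.neighborSet_eq k (!c)
    simp only [Bool.not_not] at hN
    refine ⟨fun h ↦ ?_, fun h ↦ ?_, fun h ↦ ?_⟩
    · rcases mem_of_neighborSet_eq hN h.symm with h' | h' | h'
      exacts [(hψ.adj_rung k c).ne h', (hψ.adj_succ k c).ne h', h₂ k c h'.symm]
    · rcases mem_of_neighborSet_eq (hψ.neighborSet_eq (k + 1) c) h.symm with h' | h' | h'
      exacts [(hψ.adj_succ k c).ne h', h₂ k c h'.symm, h₃ k c h'.symm]
    · rcases mem_of_neighborSet_eq hN h with h' | h' | h'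
      · exact h₂ k (!c) (by simpa using h')
      · exact (hψ.adj_succ (k + 1) c).ne h'.symm
      · exact (hψ.adj_rung (k + 2) c).ne h'
  classical
  intro s hs
  obtain ⟨x, y, z, hxy, hxz, hyz, -⟩ := is3Clique_iff.1 hs
  obtain ⟨k, c, rfl⟩ := hcover x
  obtain ⟨h₁, h₂, h₃⟩ := hpair k c
  rcases mem_of_neighborSet_eq (hψ.neighborSet_eq k c) hxy with rfl | rfl | rfl <;>
    rcases mem_of_neighborSet_eq (hψ.neighborSet_eq k c) hxz with rfl | rfl | rfl
  all_goals first
    | exact G.irrefl hyz | exact h₁ hyz | exact h₁ hyz.symm | exact h₂ hyz | exact h₂ hyz.symm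
    | exact h₃ hyz | exact h₃ hyz.symm

end

theorem nonempty_iso {W : Type*} [Nonempty W] {H : SimpleGraph W} {χ : ℕ → Bool → W}
    (hχ : IsLadder H χ) (hcover : ∀ w, ∃ k c, χ (k + 1) c = w) (f : W → V)
    (hf : Function.Injective f) (hfχ : ∀ k c, f (χ k c) = ψ k c) (hconn : G.Connected) :
    Nonempty (G ≃g H) := by
  refine Hom.nonempty_iso_of_injective ⟨f, fun {p q} h ↦ ?_⟩ hf (fun w v hv ↦ ?_) hconn
  · obtain ⟨k, c, rfl⟩ := hcover p
    rcases mem_of_neighborSet_eq (hχ.neighborSet_eq k c) h with rfl | rfl | rfl <;>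
      simp only [hfχ]
    exacts [(hψ.adj_succ k c).symm, hψ.adj_rung _ _, hψ.adj_succ _ _]
  · obtain ⟨k, c, rfl⟩ := hcover w
    change G.Adj (f (χ (k + 1) c)) v at hv
    rw [hfχ] at hv
    rcases mem_of_neighborSet_eq (hψ.neighborSet_eq k c) hv with rfl | rfl | rfl
    exacts [⟨_, (hχ.adj_succ k c).symm, hfχ _ _⟩, ⟨_, hχ.adj_rung _ _, hfχ _ _⟩,
      ⟨_, hχ.adj_succ _ _, hfχ _ _⟩]

theorem nonempty_iso_prismGraph (hconn : G.Connected) {j : ℕ} (hj : 3 ≤ j)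
    (hper : ∀ k c, ψ (j + k) c = ψ k c)
    (hinj : ∀ a b c c', a < b → b < j + a → ψ b c' ≠ ψ a c) :
    Nonempty (G ≃g prismGraph j) := by
  have : NeZero j := ⟨by omega⟩
  refine hψ.nonempty_iso (isLadder_prismColumns hj) exists_prismColumns_eq
    (fun p ↦ ψ p.1.val p.2) ?_ (fun k c ↦ ?_) hconn
  · rintro ⟨i, c⟩ ⟨i', c'⟩ h
    change ψ i.val c = ψ i'.val c' at h
    have := ZMod.val_lt i
    have := ZMod.val_lt i'
    rcases lt_trichotomy i.val i'.val with hlt | heq | hlt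
    · exact absurd h.symm (hinj _ _ _ _ hlt (by omega))
    · obtain rfl := ZMod.val_injective j heq
      rcases Bool.eq_or_eq_not c' c with rfl | rfl
      · rfl
      · exact absurd h (hψ.adj_rung _ _).ne
    · exact absurd h (hinj _ _ _ _ hlt (by omega))
  · simp only [prismColumns, ZMod.val_natCast]
    exact Function.Periodic.map_mod_nat (f := (ψ · c)) (fun k ↦ by rw [add_comm]; exact hper k c) k

theorem nonempty_iso_mobiusLadder (hconn : G.Connected) {j : ℕ} (hj : 3 ≤ j)
    (hper : ∀ k c, ψ (j + k) (!c) = ψ k c)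
    (hinj : ∀ a b c c', a < b → b < j + a → ψ b c' ≠ ψ a c) :
    Nonempty (G ≃g mobiusLadder j) := by
  have : NeZero (2 * j) := ⟨by omega⟩
  have hrung (k : ℕ) : ψ (j + k) false = ψ k true := hper k true
  have hne {a b : ℕ} (hab : a < b) (hb : b < 2 * j) : ψ b false ≠ ψ a false := by
    rcases lt_trichotomy b (j + a) with hlt | rfl | hlt
    · exact hinj _ _ _ _ hab hlt
    · rw [hrung]
      exact (hψ.adj_rung a false).ne'
    · obtain ⟨b, rfl⟩ : ∃ b', b = j + b' := ⟨b - j, by omega⟩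
      rw [hrung]
      exact hinj _ _ _ _ (by omega) (by omega)
  have hval (k : ℕ) : ψ (k : ZMod (2 * j)).val false = ψ k false := by
    rw [ZMod.val_natCast]
    refine Function.Periodic.map_mod_nat (f := (ψ · false)) (fun k ↦ ?_) k
    simp only [show k + 2 * j = j + (j + k) by ring, hrung]
    exact hper k false
  refine hψ.nonempty_iso (isLadder_mobiusColumns hj) exists_mobiusColumns_eq
    (fun i ↦ ψ i.val false) (fun i i' h ↦ ?_) (fun k c ↦ ?_) hconn
  · change ψ i.val false = ψ i'.val false at h
    have := ZMod.val_lt i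
    have := ZMod.val_lt i'
    rcases lt_trichotomy i.val i'.val with hlt | heq | hlt
    · exact absurd h.symm (hne hlt (by omega))
    · exact ZMod.val_injective _ heq
    · exact absurd h (hne hlt (by omega))
  · cases c
    · simpa using hval k
    · simpa [← hrung, add_comm] using hval (j + k)

end IsLadder

theorem prismGraph_cliqueFree_three {n : ℕ} (hn : 4 ≤ n) : (prismGraph n).CliqueFree 3 := by
  have : NeZero n := ⟨by omega⟩
  have h₃ : (3 : ZMod n) ≠ 0 := by
    exact_mod_cast ZMod.natCast_ne_zero_of_lt three_pos (by omega)
  refine (isLadder_prismColumns (by omega)).cliqueFree_three exists_prismColumns_eq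
    (fun k c ↦ by simp) (fun k c h ↦ h₃ ?_)
  simp only [prismColumns, Prod.mk.injEq, and_true] at h
  push_cast at h
  linear_combination h

theorem prismGraph_edgeOnSquare {n : ℕ} (hn : 3 ≤ n) {x y : ZMod n × Bool}
    (hxy : (prismGraph n).Adj x y) : (prismGraph n).EdgeOnSquare x y :=
  have : NeZero n := ⟨by omega⟩
  (isLadder_prismColumns hn).edgeOnSquare exists_prismColumns_eq hxy

theorem mobiusLadder_cliqueFree_three {n : ℕ} (hn : 3 ≤ n) : (mobiusLadder n).CliqueFree 3 := by
  have : NeZero (2 * n) := ⟨by omega⟩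
  have hne (a : ℕ) (h : 0 < a) (h' : a < 2 * n) : (a : ZMod (2 * n)) ≠ 0 :=
    ZMod.natCast_ne_zero_of_lt h h'
  have h₃ : (3 : ZMod (2 * n)) ≠ 0 := by exact_mod_cast hne 3 three_pos (by omega)
  have hn₂ : (n : ZMod (2 * n)) + 2 ≠ 0 := by exact_mod_cast hne (n + 2) (by omega) (by omega)
  have hn₂' : (n : ZMod (2 * n)) - 2 ≠ 0 := by
    have := hne (n - 2) (by omega) (by omega)
    rwa [Nat.cast_sub (by omega), Nat.cast_ofNat] at this
  refine (isLadder_mobiusColumns hn).cliqueFree_three exists_mobiusColumns_eq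
    (fun k c h ↦ ?_) (fun k c h ↦ h₃ ?_) <;>
    cases c <;>
    simp only [mobiusColumns, cond_true, cond_false, Bool.not_true, Bool.not_false] at h <;>
    push_cast at h
  · exact hn₂ (by linear_combination h)
  · exact hn₂' (by linear_combination -h)
  · linear_combination h
  · linear_combination h

theorem mobiusLadder_edgeOnSquare {n : ℕ} (hn : 3 ≤ n) {x y : ZMod (2 * n)}
    (hxy : (mobiusLadder n).Adj x y) : (mobiusLadder n).EdgeOnSquare x y :=
  have : NeZero (2 * n) := ⟨by omega⟩
  (isLadder_mobiusColumns hn).edgeOnSquare exists_mobiusColumns_eq hxy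

theorem cliqueFree_three_and_edgeOnSquare_iff [Finite V] {G : SimpleGraph V}
    [∀ v, Fintype (G.neighborSet v)] (hconn : G.Connected) (hcubic : ∀ v, G.degree v = 3) :
    (G.CliqueFree 3 ∧ ∀ x y, G.Adj x y → G.EdgeOnSquare x y) ↔
      (∃ n, 4 ≤ n ∧ Nonempty (G ≃g prismGraph n)) ∨
        ∃ k, 3 ≤ k ∧ Nonempty (G ≃g mobiusLadder k) := by
  constructor
  · rintro ⟨hT, hS⟩
    have : Nonempty V := hconn.nonempty
    obtain ⟨ψ, hψ⟩ := exists_isLadder hcubic hS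
    obtain ⟨j, f, hj, hj₄, hper, hinj⟩ := hψ.exists_shift_eq hT
    cases f
    · exact Or.inl ⟨j, hj₄ rfl, hψ.nonempty_iso_prismGraph hconn hj (by simpa using hper) hinj⟩
    · exact Or.inr ⟨j, hj, hψ.nonempty_iso_mobiusLadder hconn hj (by simpa using hper) hinj⟩
  · rintro (⟨n, hn, ⟨e⟩⟩ | ⟨k, hk, ⟨e⟩⟩)
    · exact ⟨(prismGraph_cliqueFree_three hn).comap e.isContained,
        fun x y hxy ↦ e.edgeOnSquare (prismGraph_edgeOnSquare (by omega) (e.map_adj_iff.2 hxy))⟩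
    · exact ⟨(mobiusLadder_cliqueFree_three hk).comap e.isContained,
        fun x y hxy ↦ e.edgeOnSquare (mobiusLadder_edgeOnSquare hk (e.map_adj_iff.2 hxy))⟩

/-- A (finite, connected) simple 3-regular graph has `κ₀(x,y) = 0` on
every edge iff it is isomorphic to a prism graph `Y n` with `n ≥ 4` or to a Möbius
ladder `M k` with `k ≥ 3`. -/
theorem cubic_ollivier_zero_iff_prism_or_mobius {V : Type*} [Fintype V]
    (G : SimpleGraph V) [∀ v, Fintype (G.neighborSet v)]
    (hconn : G.Connected) (hcubic : ∀ v : V, G.degree v = 3) :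
    (∀ x y : V, G.Adj x y → kappaZero G x y = 0) ↔
      ((∃ n : ℕ, 4 ≤ n ∧ Nonempty (G ≃g prismGraph n)) ∨
        (∃ k : ℕ, 3 ≤ k ∧ Nonempty (G ≃g mobiusLadder k))) :=
  (forall_kappaZero_eq_zero_iff hcubic).trans (cliqueFree_three_and_edgeOnSquare_iff hconn hcubic)
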